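/- arXiv:1308.3178 — 4 statements merged into one kernel-verified Lean document; each statement's English description precedes it below -/
import Mathlib

section
/- For odd n ≥ 5, the graph obtained from the complete multipartite graph with parts of sizes 3,2,2,...,2 (one part of size 3 and (n-3)/2 parts of size 2) by adding one edge inside the part of size 3 has exactly (n(n-2)-3)/2 total dominating sets of size 2. -/
/-!
If the two vertices of `S` lie in the same part, `S` is total dominating only if they are
adjacent, i.e. `S = {0, 1}`, and then vertex `2` has no neighbour in `S`. If they lie in different
parts, every vertex is adjacent to one of them. So the total dominating pairs are exactly the
edges of the complete multipartite graph `K_{3,2,…,2}`, which the handshake lemma counts: its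
degrees are `n - 3` on the part of size 3 and `n - 2` elsewhere.
-/

def partIdx (n : ℕ) (v : Fin n) : ℕ :=
  if v.val < 3 then 0 else (v.val - 1) / 2

def multipartitePlusEdge (n : ℕ) : SimpleGraph (Fin n) :=
  SimpleGraph.fromRel (fun v w => partIdx n v ≠ partIdx n w ∨ (v.val = 0 ∧ w.val = 1))

open Finset

namespace SimpleGraph

variable {V : Type*} [Fintype V] [DecidableEq V]

theorem card_cliqueFinset_two (G : SimpleGraph V) [DecidableRel G.Adj] :
    #(G.cliqueFinset 2) = #G.edgeFinset := by
  symm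
  refine card_bij (fun e _ => e.toFinset) ?_ ?_ ?_
  · rintro ⟨a, b⟩ he
    rw [mem_edgeFinset, mem_edgeSet] at he
    simp only [Sym2.toFinset_mk_eq, mem_cliqueFinset_iff, isNClique_iff, coe_pair, isClique_pair,
      card_pair he.ne]
    exact ⟨fun _ => he, trivial⟩
  · intro e _ e' _ h
    exact Sym2.ext fun x => by rw [← Sym2.mem_toFinset, h, Sym2.mem_toFinset]
  · intro s hs
    obtain ⟨hclique, hcard⟩ := mem_cliqueFinset_iff.mp hs
    obtain ⟨a, b, hab, rfl⟩ := card_eq_two.mp hcard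
    rw [coe_pair, isClique_pair] at hclique
    exact ⟨s(a, b), by simpa using hclique hab, Sym2.toFinset_mk_eq⟩

theorem degree_comap_top {β : Type*} [DecidableEq β] (f : V → β) (v : V) :
    ((⊤ : SimpleGraph β).comap f).degree v = Fintype.card V - #{w | f v = f w} := by
  rw [← card_neighborFinset_eq_degree, ← card_compl, compl_filter]
  congr 1
  ext w
  simp

end SimpleGraph

namespace SimpleGraph

variable {V : Type*}

def IsTotalDominating (G : SimpleGraph V) (S : Finset V) : Prop :=
  ∀ v, ∃ u ∈ S, G.Adj v u

theorem IsTotalDominating.mono {G H : SimpleGraph V} {S : Finset V} (hGH : G ≤ H)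
    (hS : G.IsTotalDominating S) : H.IsTotalDominating S :=
  fun v => (hS v).imp fun _ ⟨hu, hvu⟩ => ⟨hu, hGH hvu⟩

theorem isTotalDominating_comap_top_of_isNClique_two {β : Type*} {f : V → β} {S : Finset V}
    (hS : ((⊤ : SimpleGraph β).comap f).IsNClique 2 S) :
    ((⊤ : SimpleGraph β).comap f).IsTotalDominating S := by
  classical
  obtain ⟨a, b, hab, rfl⟩ := card_eq_two.mp hS.card_eq
  have hfab : f a ≠ f b := hS.isClique (by simp) (by simp) hab
  intro v
  by_cases hva : f v = f a
  · exact ⟨b, by simp, by simpa [hva] using hfab⟩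
  · exact ⟨a, by simp, by simpa using hva⟩

end SimpleGraph

open SimpleGraph

abbrev multipartite (n : ℕ) : SimpleGraph (Fin n) :=
  (⊤ : SimpleGraph ℕ).comap (partIdx n)

theorem multipartite_le (n : ℕ) : multipartite n ≤ multipartitePlusEdge n := by
  intro v w h
  exact (fromRel_adj _ v w).mpr ⟨fun hvw => h (congrArg _ hvw), Or.inl (Or.inl h)⟩

theorem val_lt_two_of_adj_of_partIdx_eq {n : ℕ} {v w : Fin n}
    (h : (multipartitePlusEdge n).Adj v w) (hvw : partIdx n v = partIdx n w) :
    v.val < 2 ∧ w.val < 2 := by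
  simp [multipartitePlusEdge, hvw] at h
  omega

theorem card_eq_two_and_isTotalDominating_iff {n : ℕ} (hn : 3 ≤ n) (S : Finset (Fin n)) :
    (#S = 2 ∧ (multipartitePlusEdge n).IsTotalDominating S) ↔ (multipartite n).IsNClique 2 S := by
  refine ⟨fun ⟨hcard, hS⟩ => ?_, fun hS => ⟨hS.card_eq,
    (isTotalDominating_comap_top_of_isNClique_two hS).mono (multipartite_le n)⟩⟩
  obtain ⟨a, b, hab, rfl⟩ := card_eq_two.mp hcard
  refine ⟨?_, card_pair hab⟩
  rw [coe_pair, isClique_pair]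
  intro _
  by_contra hsame
  simp only [multipartite, comap_adj, top_adj, ne_eq, not_not] at hsame
  have hadj : (multipartitePlusEdge n).Adj a b := by
    obtain ⟨u, hu, hau⟩ := hS a
    obtain rfl | rfl : u = a ∨ u = b := by simpa using hu
    · exact absurd hau (SimpleGraph.irrefl _)
    · exact hau
  obtain ⟨ha, hb⟩ := val_lt_two_of_adj_of_partIdx_eq hadj hsame
  obtain ⟨u, hu, h2u⟩ := hS ⟨2, hn⟩
  have hu : u.val < 2 := by
    obtain rfl | rfl : u = a ∨ u = b := by simpa using hu
    exacts [ha, hb]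
  have h2u_same : partIdx n ⟨2, hn⟩ = partIdx n u := by simp [partIdx]; omega
  exact absurd (val_lt_two_of_adj_of_partIdx_eq h2u h2u_same).1 (by simp)

theorem card_filter_partIdx_eq {n : ℕ} (hn : 3 ≤ n) (hodd : Odd n) (v : Fin n) :
    #{w | partIdx n v = partIdx n w} = if v.val < 3 then 3 else 2 := by
  have hv := v.isLt
  split_ifs with hv3
  · have hfiber : univ.filter (fun w => partIdx n v = partIdx n w) = univ.filter (·.val < 3) := by
      ext w
      simp only [mem_filter, mem_univ, true_and, partIdx, if_pos hv3]
      split_ifs <;> omega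
    rw [hfiber, Fin.card_filter_val_lt, min_eq_right hn]
  · obtain ⟨m, rfl⟩ := hodd
    set k := (v.val - 1) / 2
    refine card_eq_two.mpr ⟨⟨2 * k + 1, by omega⟩, ⟨2 * k + 2, by omega⟩, by simp, ?_⟩
    ext w
    simp only [mem_filter, mem_univ, true_and, mem_insert, mem_singleton, Fin.ext_iff, partIdx,
      if_neg hv3]
    split_ifs <;> omega

theorem degree_multipartite {n : ℕ} (hn : 3 ≤ n) (hodd : Odd n) (v : Fin n) :
    (multipartite n).degree v = if v.val < 3 then n - 3 else n - 2 := by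
  rw [degree_comap_top, card_filter_partIdx_eq hn hodd, Fintype.card_fin]
  split_ifs <;> rfl

theorem sum_degrees_multipartite {n : ℕ} (hn : 3 ≤ n) (hodd : Odd n) :
    ∑ v, (multipartite n).degree v = (n - 3) * (n + 1) := by
  simp only [degree_multipartite hn hodd]
  rw [Fin.sum_univ_eq_sum_range (fun i => if i < 3 then n - 3 else n - 2)]
  obtain ⟨m, rfl⟩ : ∃ m, n = 3 + m := ⟨n - 3, by omega⟩
  rw [sum_range_add, show 3 + m - 2 = m + 1 by omega, add_tsub_cancel_left]
  simp only [sum_range_succ, sum_range_zero, Nat.ofNat_pos, Nat.one_lt_ofNat, Nat.lt_add_one,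
    if_true, add_lt_iff_neg_left, not_lt_zero, if_false, sum_const, card_range, smul_eq_mul]
  ring

/-- For odd `n ≥ 5`, the complete multipartite graph `K_{3,2,…,2}` with one edge added in
the part of size 3 has exactly `(n(n-2)-3)/2` total dominating sets of size 2. -/
theorem stmt7 (n : ℕ) (hn : 5 ≤ n) (hodd : Odd n) :
    {S : Finset (Fin n) | S.card = 2 ∧
        ∀ v : Fin n, ∃ u ∈ S, (multipartitePlusEdge n).Adj v u}.ncard =
      (n * (n - 2) - 3) / 2 := by
  have hn3 : 3 ≤ n := by omega
  have hdeg := (multipartite n).sum_degrees_eq_twice_card_edges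
  rw [sum_degrees_multipartite hn3 hodd] at hdeg
  calc _ = #((multipartite n).cliqueFinset 2) := by
        rw [← Set.ncard_coe_finset]
        congr 1
        ext S
        simp [← card_eq_two_and_isTotalDominating_iff hn3, IsTotalDominating]
    _ = #(multipartite n).edgeFinset := card_cliqueFinset_two _
    _ = (n - 3) * (n + 1) / 2 := by omega
    _ = (n * (n - 2) - 3) / 2 := by
        obtain ⟨m, rfl⟩ : ∃ m, n = m + 3 := ⟨n - 3, by omega⟩
        congr 1
        simp only [Nat.add_sub_cancel, show m + 3 - 2 = m + 1 by omega]
        exact (Nat.sub_eq_of_eq_add (by ring)).symm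
end

section
/- For odd n ≥ 5, every graph G on n vertices with domination number 2 has at most C(n,2) - 1 dominating sets of size 2; i.e., some 2-element subset of vertices fails to dominate. -/
open Finset

theorem Function.Involutive.exists_isFixedPt_of_odd_card {α : Type*} [Fintype α] {f : α → α}
    (hf : Function.Involutive f) (hodd : Odd (Fintype.card α)) : ∃ a, f a = a :=
  Equiv.Perm.exists_fixed_point_of_prime (p := 2) (n := 1) (σ := hf.toPerm f)
    hodd.not_two_dvd_nat (Equiv.ext fun x => hf x)

namespace SimpleGraph

variable {V : Type*} (G : SimpleGraph V)

def IsDominating (S : Finset V) : Prop := ∀ w ∉ S, ∃ u ∈ S, G.Adj w u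

variable {G}

theorem exists_ne_not_adj_of_not_isDominating_singleton {x : V} (hx : ¬ G.IsDominating {x}) :
    ∃ w, w ≠ x ∧ ¬ G.Adj x w := by
  simp only [IsDominating, mem_singleton, exists_eq_left, not_forall] at hx
  obtain ⟨w, hwx, hadj⟩ := hx
  exact ⟨w, hwx, fun h => hadj h.symm⟩

theorem eq_of_not_adj_of_isDominating_pair [DecidableEq V]
    (hpair : ∀ S : Finset V, #S = 2 → G.IsDominating S)
    {x w₁ w₂ : V} (h₁ : w₁ ≠ x) (h₂ : w₂ ≠ x) (hn₁ : ¬ G.Adj x w₁) (hn₂ : ¬ G.Adj x w₂) :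
    w₁ = w₂ := by
  by_contra hne
  obtain ⟨u, hu, hadj⟩ := hpair {w₁, w₂} (card_pair hne) x (by simp [h₁.symm, h₂.symm])
  rcases mem_insert.mp hu with rfl | hu
  · exact hn₁ hadj
  · exact hn₂ (mem_singleton.mp hu ▸ hadj)

/-- If every 2-set dominates but no vertex does, each vertex has exactly one non-neighbour, and
"the non-neighbour of" is a fixed-point-free involution. -/
theorem exists_card_two_not_isDominating [Fintype V] (hodd : Odd (Fintype.card V))
    (hsingle : ∀ x : V, ¬ G.IsDominating {x}) :
    ∃ S : Finset V, #S = 2 ∧ ¬ G.IsDominating S := by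
  classical
  by_contra! hpair
  choose f hf_ne hf_nadj using
    fun x => exists_ne_not_adj_of_not_isDominating_singleton (hsingle x)
  have hinv : Function.Involutive f := fun x =>
    eq_of_not_adj_of_isDominating_pair hpair (hf_ne (f x)) (hf_ne x).symm (hf_nadj (f x))
      fun h => hf_nadj x h.symm
  obtain ⟨x, hx⟩ := hinv.exists_isFixedPt_of_odd_card hodd
  exact hf_ne x hx

theorem ncard_isDominating_card_two_lt [Fintype V] {S₀ : Finset V} (hS₀ : #S₀ = 2)
    (hnot : ¬ G.IsDominating S₀) :
    {S : Finset V | #S = 2 ∧ G.IsDominating S}.ncard < (Fintype.card V).choose 2 := by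
  classical
  have hset : {S : Finset V | #S = 2 ∧ G.IsDominating S} =
      ↑((univ : Finset V).powersetCard 2 |>.filter G.IsDominating) := by
    ext S; simp
  rw [hset, Set.ncard_coe_finset, ← card_univ, ← card_powersetCard]
  exact card_lt_card (filter_ssubset.mpr ⟨S₀, mem_powersetCard_univ.mpr hS₀, hnot⟩)

end SimpleGraph

theorem stmt10_general (n : ℕ) (hodd : Odd n) (G : SimpleGraph (Fin n))
    (hmin : ∀ S : Finset (Fin n), (∀ w ∉ S, ∃ u ∈ S, G.Adj w u) → 2 ≤ S.card) :
    (∃ S : Finset (Fin n), S.card = 2 ∧ ¬ ∀ w ∉ S, ∃ u ∈ S, G.Adj w u) ∧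
    {S : Finset (Fin n) | S.card = 2 ∧ ∀ w ∉ S, ∃ u ∈ S, G.Adj w u}.ncard ≤
      n.choose 2 - 1 := by
  have hsingle : ∀ x, ¬ G.IsDominating {x} := fun x h => by simpa using hmin {x} h
  obtain ⟨S₀, hS₀, hnot⟩ :=
    G.exists_card_two_not_isDominating (by rwa [Fintype.card_fin]) hsingle
  refine ⟨⟨S₀, hS₀, hnot⟩, ?_⟩
  have hlt := SimpleGraph.ncard_isDominating_card_two_lt hS₀ hnot
  rw [Fintype.card_fin] at hlt
  exact Nat.le_sub_one_of_lt hlt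

/-- For odd `n ≥ 5`, every graph on `n` vertices with domination number 2 has some
non-dominating 2-set, hence at most `C(n,2) - 1` dominating sets of size 2. -/
theorem stmt10 (n : ℕ) (hn : 5 ≤ n) (hodd : Odd n) (G : SimpleGraph (Fin n))
    (hex : ∃ S : Finset (Fin n), S.card = 2 ∧ ∀ w ∉ S, ∃ u ∈ S, G.Adj w u)
    (hmin : ∀ S : Finset (Fin n), (∀ w ∉ S, ∃ u ∈ S, G.Adj w u) → 2 ≤ S.card) :
    (∃ S : Finset (Fin n), S.card = 2 ∧ ¬ ∀ w ∉ S, ∃ u ∈ S, G.Adj w u) ∧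
    {S : Finset (Fin n) | S.card = 2 ∧ ∀ w ∉ S, ∃ u ∈ S, G.Adj w u}.ncard ≤
      n.choose 2 - 1 :=
  stmt10_general n hodd G hmin
end

section
/- For odd n ≥ 5, the graph obtained from the complete multipartite graph with parts 3,2,...,2 by adding one edge in the part of size 3 has exactly C(n,2) - 1 dominating sets of size 2: the only non-dominating 2-set is the pair of nonadjacent vertices in the size-3 part. -/
/-!
A vertex `w` outside a 2-set `{a, b}` is undominated only if `a`, `b`, `w` are three distinct
vertices of one part with `w` adjacent to neither. Parts of size 2 are too small for this, so
`{a, b, w} = {0, 1, 2}`, and since `0 ~ 1` the vertex `w` must be `2`: the only non-dominating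
2-set is `{0, 1}`.
-/

open Finset

def SimpleGraph.IsDominatingSet {V : Type*} (G : SimpleGraph V) (S : Finset V) : Prop :=
  ∀ w ∉ S, ∃ u ∈ S, G.Adj w u

def lowPair (n : ℕ) : Finset (Fin n) := univ.filter (·.val < 2)

variable {n : ℕ}

lemma multipartitePlusEdge_adj {v w : Fin n} :
    (multipartitePlusEdge n).Adj v w ↔
      v ≠ w ∧ (partIdx n v ≠ partIdx n w ∨ v.val + w.val = 1) := by
  simp only [multipartitePlusEdge, SimpleGraph.fromRel_adj, ne_eq, Fin.ext_iff]
  constructor <;> omega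

lemma val_eq_two_of_not_adj_of_not_adj {a b w : Fin n} (hab : a ≠ b) (hwa : w ≠ a)
    (hwb : w ≠ b) (hna : ¬ (multipartitePlusEdge n).Adj w a)
    (hnb : ¬ (multipartitePlusEdge n).Adj w b) :
    w.val = 2 ∧ a.val + b.val = 1 := by
  simp only [multipartitePlusEdge_adj, partIdx, ne_eq, Fin.ext_iff] at *
  split_ifs at * <;> omega

lemma card_lowPair (hn : 2 ≤ n) : (lowPair n).card = 2 := by
  rw [lowPair, Fin.card_filter_val_lt]
  omega

lemma not_isDominatingSet_iff_eq_lowPair (hn : 3 ≤ n) {S : Finset (Fin n)} (hS : S.card = 2) :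
    ¬ (multipartitePlusEdge n).IsDominatingSet S ↔ S = lowPair n := by
  constructor
  · intro hS_dom
    obtain ⟨a, b, hab, rfl⟩ := card_eq_two.mp hS
    simp only [SimpleGraph.IsDominatingSet, not_forall, not_exists, not_and] at hS_dom
    obtain ⟨w, hw, hnadj⟩ := hS_dom
    simp only [mem_insert, mem_singleton, not_or] at hw
    have hsum := (val_eq_two_of_not_adj_of_not_adj hab hw.1 hw.2
      (hnadj a (by simp)) (hnadj b (by simp))).2
    ext v
    simp only [lowPair, mem_insert, mem_singleton, mem_filter, mem_univ, true_and, Fin.ext_iff]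
    have : a.val ≠ b.val := Fin.val_ne_of_ne hab
    omega
  · rintro rfl hdom
    obtain ⟨u, hu, hadj⟩ := hdom ⟨2, hn⟩ (by simp [lowPair])
    simp only [lowPair, mem_filter, mem_univ, true_and] at hu
    simp only [multipartitePlusEdge_adj, partIdx, ne_eq, Fin.ext_iff] at hadj
    split_ifs at hadj <;> omega

theorem stmt11_general (n : ℕ) (hn : 5 ≤ n) :
    {S : Finset (Fin n) | S.card = 2 ∧
        ∀ w ∉ S, ∃ u ∈ S, (multipartitePlusEdge n).Adj w u}.ncard = n.choose 2 - 1 ∧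
    (∃! S : Finset (Fin n), S.card = 2 ∧
        ¬ ∀ w ∉ S, ∃ u ∈ S, (multipartitePlusEdge n).Adj w u) ∧
    (∀ S : Finset (Fin n), S.card = 2 →
      (¬ ∀ w ∉ S, ∃ u ∈ S, (multipartitePlusEdge n).Adj w u) →
        ∀ v ∈ S, partIdx n v = 0) := by
  have hcard := card_lowPair (n := n) (by omega)
  have hchar (S : Finset (Fin n)) (hS : S.card = 2) :=
    not_isDominatingSet_iff_eq_lowPair (by omega) hS
  have hset : {S : Finset (Fin n) | S.card = 2 ∧ (multipartitePlusEdge n).IsDominatingSet S} =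
      ↑((univ.powersetCard 2).erase (lowPair n)) := by
    ext S
    simp only [Set.mem_ofPred_eq, coe_erase, Set.mem_sdiff, mem_coe, mem_powersetCard,
      subset_univ, true_and, Set.mem_singleton_iff]
    exact and_congr_right fun hS => (not_iff_comm.mp (hchar S hS)).symm
  refine ⟨?_, ⟨lowPair n, ⟨hcard, (hchar _ hcard).2 rfl⟩, fun S hS => (hchar S hS.1).1 hS.2⟩, ?_⟩
  · change {S | S.card = 2 ∧ (multipartitePlusEdge n).IsDominatingSet S}.ncard = _
    rw [hset, Set.ncard_coe_finset, card_erase_of_mem (by simp [hcard]), card_powersetCard,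
      card_univ, Fintype.card_fin]
  · intro S hS hnd v hv
    rw [(hchar S hS).1 hnd, lowPair, mem_filter] at hv
    simp only [partIdx]
    split_ifs <;> omega

/-- For odd `n ≥ 5`, the graph `K_{3,2,…,2}` plus one edge inside the size-3 part has
exactly `C(n,2) - 1` dominating sets of size 2: there is exactly one 2-set of vertices
inside the size-3 part that fails to dominate (namely the pair whose two vertices do not
dominate the remaining vertex of that part). -/
theorem stmt11 (n : ℕ) (hn : 5 ≤ n) (hodd : Odd n) :
    {S : Finset (Fin n) | S.card = 2 ∧
        ∀ w ∉ S, ∃ u ∈ S, (multipartitePlusEdge n).Adj w u}.ncard = n.choose 2 - 1 ∧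
    (∃! S : Finset (Fin n), S.card = 2 ∧
        ¬ ∀ w ∉ S, ∃ u ∈ S, (multipartitePlusEdge n).Adj w u) ∧
    (∀ S : Finset (Fin n), S.card = 2 →
      (¬ ∀ w ∉ S, ∃ u ∈ S, (multipartitePlusEdge n).Adj w u) →
        ∀ v ∈ S, partIdx n v = 0) :=
  stmt11_general n hn
end

section
/- For even x ≥ 2 and n divisible by x, the disjoint union of x/2 copies of (K_{2n/x} minus a perfect matching) is a graph on n vertices with domination number x having at least C(2n/x, 2)^{x/2} dominating sets of size x; in particular the number of such dominating sets is Ω(n^x) for fixed x. -/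
/-- The disjoint union of `x/2` copies of the graph `K_{2n/x}` minus a perfect matching,
on the vertex set `Fin (x/2) × Fin (2n/x)` (of cardinality `n` whenever `x ∣ n`). -/
def copiesKminusPM (n x : ℕ) : SimpleGraph (Fin (x / 2) × Fin (2 * n / x)) :=
  SimpleGraph.fromRel (fun v w => v.1 = w.1 ∧ v.2.val / 2 ≠ w.2.val / 2)

/-!
In `K_{2m}` minus a perfect matching a vertex is dominated exactly by the vertices outside its
matching pair. So a dominating set meets every copy in at least two vertices (one vertex leaves
its partner undominated), while any two vertices of a copy already dominate it. Hence the
domination number is `2 · (x/2) = x`, and choosing a pair in each copy independently gives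
`C(2n/x, 2)^(x/2)` dominating sets of size `x`.
-/

open Finset

section Fibers

theorem card_eq_sum_card_filter_fst {ι α : Type*} [Fintype ι] [DecidableEq ι]
    (S : Finset (ι × α)) : #S = ∑ i, #{v ∈ S | v.1 = i} :=
  card_eq_sum_card_fiberwise fun v _ => mem_univ v.1

theorem card_eq_of_forall_card_filter_fst_eq {ι α : Type*} [Fintype ι] [DecidableEq ι]
    {S : Finset (ι × α)} {k : ℕ} (hS : ∀ i, #{v ∈ S | v.1 = i} = k) :
    #S = Fintype.card ι * k := by
  simp [card_eq_sum_card_filter_fst S, hS]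

theorem le_card_of_forall_le_card_filter_fst {ι α : Type*} [Fintype ι] [DecidableEq ι]
    {S : Finset (ι × α)} {k : ℕ} (hS : ∀ i, k ≤ #{v ∈ S | v.1 = i}) :
    Fintype.card ι * k ≤ #S := by
  calc Fintype.card ι * k = ∑ _i : ι, k := by simp [mul_comm]
    _ ≤ ∑ i, #{v ∈ S | v.1 = i} := sum_le_sum fun i _ => hS i
    _ = #S := (card_eq_sum_card_filter_fst S).symm

variable {ι α : Type*} [Fintype ι] [Fintype α] [DecidableEq α]

def ofFibers (g : ι → Finset α) : Finset (ι × α) := {v | v.2 ∈ g v.1}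

@[simp]
theorem mem_ofFibers {g : ι → Finset α} {v : ι × α} : v ∈ ofFibers g ↔ v.2 ∈ g v.1 := by
  simp [ofFibers]

theorem filter_fst_ofFibers [DecidableEq ι] (g : ι → Finset α) (i : ι) :
    {v ∈ ofFibers g | v.1 = i} = (g i).map (Function.Embedding.sectR i α) := by
  ext ⟨j, a⟩
  simp only [mem_filter, mem_ofFibers, mem_map, Function.Embedding.sectR_apply, Prod.mk.injEq]
  constructor
  · rintro ⟨ha, rfl⟩
    exact ⟨a, ha, rfl, rfl⟩
  · rintro ⟨b, hb, rfl, rfl⟩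
    exact ⟨hb, rfl⟩

theorem ofFibers_injective : Function.Injective (ofFibers : (ι → Finset α) → Finset (ι × α)) := by
  intro g g' h
  funext i
  ext a
  simpa using congrArg ((i, a) ∈ ·) h

theorem choose_pow_le_ncard_fibers [DecidableEq ι] (k : ℕ) :
    (Fintype.card α).choose k ^ Fintype.card ι ≤
      {S : Finset (ι × α) | ∀ i, #{v ∈ S | v.1 = i} = k}.ncard := by
  have hA : #(Fintype.piFinset fun _ : ι => (univ : Finset α).powersetCard k) =
      (Fintype.card α).choose k ^ Fintype.card ι := by
    simp [Fintype.card_piFinset, card_powersetCard]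
  rw [← hA, ← Set.ncard_coe_finset, ← Set.ncard_image_of_injective _ ofFibers_injective]
  refine Set.ncard_le_ncard ?_
  rintro _ ⟨g, hg, rfl⟩ i
  rw [filter_fst_ofFibers, card_map]
  simpa using Fintype.mem_piFinset.mp hg i

end Fibers

section KminusPM

variable {n x : ℕ}

theorem copiesKminusPM_adj {v w : Fin (x / 2) × Fin (2 * n / x)} :
    (copiesKminusPM n x).Adj v w ↔ v.1 = w.1 ∧ v.2.val / 2 ≠ w.2.val / 2 := by
  rw [copiesKminusPM, SimpleGraph.fromRel_adj]
  constructor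
  · rintro ⟨-, h | ⟨h₁, h₂⟩⟩
    · exact h
    · exact ⟨h₁.symm, Ne.symm h₂⟩
  · rintro ⟨h₁, h₂⟩
    exact ⟨fun h => h₂ (by rw [h]), Or.inl ⟨h₁, h₂⟩⟩

theorem exists_ne_div_two_eq {m : ℕ} (hm : Even m) (j : Fin m) :
    ∃ k : Fin m, k ≠ j ∧ k.val / 2 = j.val / 2 := by
  obtain ⟨c, rfl⟩ := hm
  refine ⟨⟨2 * (j / 2) + (1 - j % 2), by omega⟩, fun h => ?_, by simp only; omega⟩
  have := congrArg Fin.val h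
  simp only at this
  omega

theorem two_le_card_filter_fst_of_isDominatingSet (hm : Even (2 * n / x)) (hpos : 0 < 2 * n / x)
    {S : Finset (Fin (x / 2) × Fin (2 * n / x))} (hS : (copiesKminusPM n x).IsDominatingSet S)
    (i : Fin (x / 2)) : 2 ≤ #{v ∈ S | v.1 = i} := by
  by_contra! hlt
  obtain ⟨j, hj⟩ : ∃ j, ∀ u ∈ S, u.1 = i → u = (i, j) := by
    by_cases hfib : ∃ u ∈ S, u.1 = i
    · obtain ⟨u, huS, rfl⟩ := hfib
      refine ⟨u.2, fun u' hu'S hu' => ?_⟩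
      exact card_le_one.mp (Nat.lt_succ_iff.mp hlt) u' (by simp [hu'S, hu']) u (by simp [huS])
    · push Not at hfib
      exact ⟨⟨0, hpos⟩, fun u huS hu => absurd hu (hfib u huS)⟩
  -- the matching partner of `(i, j)` has no neighbour in `S`
  obtain ⟨k, hkj, hk⟩ := exists_ne_div_two_eq hm j
  have hkS : (i, k) ∉ S := fun h => hkj (congrArg Prod.snd (hj _ h rfl))
  obtain ⟨u, huS, hadj⟩ := hS _ hkS
  rw [copiesKminusPM_adj] at hadj
  obtain rfl := hj u huS hadj.1.symm
  exact hadj.2 hk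

theorem isDominatingSet_of_two_le_card_filter_fst {S : Finset (Fin (x / 2) × Fin (2 * n / x))}
    (hS : ∀ i, 2 ≤ #{v ∈ S | v.1 = i}) : (copiesKminusPM n x).IsDominatingSet S := by
  intro w hw
  obtain ⟨a, ha, b, hb, hab⟩ := one_lt_card.mp (hS w.1)
  simp only [mem_filter] at ha hb
  by_contra! hnone
  simp only [copiesKminusPM_adj, not_and, not_not] at hnone
  have hwa := hnone a ha.1 ha.2.symm
  have hwb := hnone b hb.1 hb.2.symm
  have hab₂ : a.2 ≠ b.2 := fun h => hab (Prod.ext (ha.2.trans hb.2.symm) h)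
  have haw : a.2 ≠ w.2 := fun h => hw (Prod.ext ha.2 h ▸ ha.1)
  have hbw : b.2 ≠ w.2 := fun h => hw (Prod.ext hb.2 h ▸ hb.1)
  simp only [ne_eq, Fin.ext_iff] at hab₂ haw hbw
  -- three distinct numbers cannot have the same half
  omega

theorem le_card_of_isDominatingSet (hx : Even x) (hm : Even (2 * n / x)) (hpos : 0 < 2 * n / x)
    {S : Finset (Fin (x / 2) × Fin (2 * n / x))} (hS : (copiesKminusPM n x).IsDominatingSet S) :
    x ≤ #S := by
  have := le_card_of_forall_le_card_filter_fst
    (two_le_card_filter_fst_of_isDominatingSet hm hpos hS)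
  rwa [Fintype.card_fin, Nat.div_two_mul_two_of_even hx] at this

theorem choose_pow_le_ncard_dominatingSets (hx : Even x) :
    (2 * n / x).choose 2 ^ (x / 2) ≤ {S : Finset (Fin (x / 2) × Fin (2 * n / x)) |
      #S = x ∧ (copiesKminusPM n x).IsDominatingSet S}.ncard :=
  calc _ = (Fintype.card (Fin (2 * n / x))).choose 2 ^ Fintype.card (Fin (x / 2)) := by
        simp only [Fintype.card_fin]
    _ ≤ {S : Finset (Fin (x / 2) × Fin (2 * n / x)) | ∀ i, #{v ∈ S | v.1 = i} = 2}.ncard :=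
        choose_pow_le_ncard_fibers 2
    _ ≤ _ := Set.ncard_le_ncard fun S hS => by
        refine ⟨?_, isDominatingSet_of_two_le_card_filter_fst fun i => (hS i).ge⟩
        rw [card_eq_of_forall_card_filter_fst_eq hS, Fintype.card_fin,
          Nat.div_two_mul_two_of_even hx]

end KminusPM

theorem stmt18_general (n x : ℕ) (hxe : Even x) (hdvd : x ∣ n)
    (hsz : 4 ≤ 2 * n / x) :
    Fintype.card (Fin (x / 2) × Fin (2 * n / x)) = n ∧
    (∃ S : Finset (Fin (x / 2) × Fin (2 * n / x)), S.card = x ∧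
      ∀ w ∉ S, ∃ u ∈ S, (copiesKminusPM n x).Adj w u) ∧
    (∀ S : Finset (Fin (x / 2) × Fin (2 * n / x)),
      (∀ w ∉ S, ∃ u ∈ S, (copiesKminusPM n x).Adj w u) → x ≤ S.card) ∧
    ((2 * n / x).choose 2) ^ (x / 2) ≤
      {S : Finset (Fin (x / 2) × Fin (2 * n / x)) | S.card = x ∧
        ∀ w ∉ S, ∃ u ∈ S, (copiesKminusPM n x).Adj w u}.ncard := by
  have hm : 2 * n / x = 2 * (n / x) := Nat.mul_div_assoc 2 hdvd
  have hcount := choose_pow_le_ncard_dominatingSets (n := n) hxe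
  have hchoose : 0 < (2 * n / x).choose 2 := Nat.choose_pos (by omega)
  refine ⟨?_, Set.nonempty_of_ncard_ne_zero ((pow_pos hchoose _).trans_le hcount).ne',
    fun S => le_card_of_isDominatingSet hxe (hm ▸ even_two_mul _) (by omega), hcount⟩
  rw [Fintype.card_prod, Fintype.card_fin, Fintype.card_fin, hm, ← mul_assoc,
    Nat.div_two_mul_two_of_even hxe, Nat.mul_div_cancel' hdvd]

/-- For even `x ≥ 2` and `n` divisible by `x` with `2n/x ≥ 4`, the disjoint union of
`x/2` copies of `K_{2n/x}` minus a perfect matching is a graph on `n` vertices with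
domination number `x` having at least `C(2n/x, 2)^(x/2)` dominating sets of size `x`. -/
theorem stmt18 (n x : ℕ) (hx : 2 ≤ x) (hxe : Even x) (hdvd : x ∣ n)
    (hsz : 4 ≤ 2 * n / x) :
    Fintype.card (Fin (x / 2) × Fin (2 * n / x)) = n ∧
    (∃ S : Finset (Fin (x / 2) × Fin (2 * n / x)), S.card = x ∧
      ∀ w ∉ S, ∃ u ∈ S, (copiesKminusPM n x).Adj w u) ∧
    (∀ S : Finset (Fin (x / 2) × Fin (2 * n / x)),
      (∀ w ∉ S, ∃ u ∈ S, (copiesKminusPM n x).Adj w u) → x ≤ S.card) ∧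
    ((2 * n / x).choose 2) ^ (x / 2) ≤
      {S : Finset (Fin (x / 2) × Fin (2 * n / x)) | S.card = x ∧
        ∀ w ∉ S, ∃ u ∈ S, (copiesKminusPM n x).Adj w u}.ncard :=
  stmt18_general n x hxe hdvd hsz
end
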